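/- arXiv:1310.7536 — 5 statements merged into one kernel-verified Lean document; each statement's English description precedes it below -/
import Mathlib

section
/- Let q ≥ 2, n ≥ 1, t ≥ 0 and let C ⊆ {0,1,…,q−1}^n. For x ∈ {0,1,…,q−1}^n let B_t(x) = {y ∈ {0,1,…,q−1}^n : y_i ≤ x_i for all i and Σ_{i=1}^n (x_i − y_i) ≤ t} be the set of words obtainable from x by at most t asymmetric errors. Then the balls B_t(x), x ∈ C, are pairwise disjoint (i.e., C corrects t asymmetric errors) if and only if Δ(x,y) ≥ t+1 for all distinct x, y ∈ C. -/
/-- `N(x,y) = Σᵢ max(yᵢ - xᵢ, 0)` for words over the alphabet `{0,…,q-1} ⊆ ℤ`. -/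
def Nasym {n q : ℕ} (x y : Fin n → Fin q) : ℤ :=
  ∑ i, max (((y i : ℕ) : ℤ) - ((x i : ℕ) : ℤ)) 0

/-- The asymmetric distance `Δ(x,y) = max(N(x,y), N(y,x))`. -/
def Dasym {n q : ℕ} (x y : Fin n → Fin q) : ℤ :=
  max (Nasym x y) (Nasym y x)

/-- The ball of words obtainable from `x` by at most `t` asymmetric errors:
`B_t(x) = {y : yᵢ ≤ xᵢ for all i, Σᵢ (xᵢ - yᵢ) ≤ t}`. -/
def ballAsym {n q : ℕ} (t : ℕ) (x : Fin n → Fin q) : Set (Fin n → Fin q) :=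
  {y | (∀ i, y i ≤ x i) ∧ ∑ i, (((x i : ℕ) : ℤ) - ((y i : ℕ) : ℤ)) ≤ (t : ℤ)}

/-!
A word `z` lies in both balls `B_t(x)` and `B_t(y)` only if `z ≤ x ⊓ y` coordinatewise, and
lowering `z` only enlarges the two error counts `Σ (xᵢ - zᵢ)` and `Σ (yᵢ - zᵢ)`. So the balls
meet iff they both contain the meet `x ⊓ y`, whose error counts are exactly `N(y,x)` and
`N(x,y)`; that is, iff `Δ(x,y) ≤ t`.
-/

namespace AsymmetricCode

variable {n q : ℕ}

theorem nasym_eq_sum_sub_inf (x y : Fin n → Fin q) :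
    Nasym x y = ∑ i, (((y i : ℕ) : ℤ) - (((x ⊓ y) i : ℕ) : ℤ)) := by
  refine Finset.sum_congr rfl fun i _ => ?_
  rw [Pi.inf_apply, Fin.coe_min]
  omega

theorem nasym_le_sum_sub {x y z : Fin n → Fin q} (hzx : z ≤ x) (hzy : z ≤ y) :
    Nasym x y ≤ ∑ i, (((y i : ℕ) : ℤ) - ((z i : ℕ) : ℤ)) := by
  refine Finset.sum_le_sum fun i _ => ?_
  have hx : (z i : ℕ) ≤ x i := hzx i
  have hy : (z i : ℕ) ≤ y i := hzy i
  omega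

theorem inf_mem_ballAsym_iff {t : ℕ} (x y : Fin n → Fin q) :
    x ⊓ y ∈ ballAsym t x ↔ Nasym y x ≤ t := by
  rw [nasym_eq_sum_sub_inf, inf_comm y x]
  exact and_iff_right fun i => inf_le_left

theorem not_disjoint_ballAsym_iff {t : ℕ} {x y : Fin n → Fin q} :
    ¬Disjoint (ballAsym t x) (ballAsym t y) ↔ Dasym x y ≤ t := by
  rw [Set.not_disjoint_iff, Dasym, max_le_iff]
  constructor
  · rintro ⟨z, ⟨hzx, hx⟩, ⟨hzy, hy⟩⟩
    exact ⟨(nasym_le_sum_sub hzx hzy).trans hy, (nasym_le_sum_sub hzy hzx).trans hx⟩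
  · rintro ⟨hxy, hyx⟩
    refine ⟨x ⊓ y, (inf_mem_ballAsym_iff x y).2 hyx, ?_⟩
    rw [inf_comm]
    exact (inf_mem_ballAsym_iff y x).2 hxy

theorem disjoint_ballAsym_iff {t : ℕ} {x y : Fin n → Fin q} :
    Disjoint (ballAsym t x) (ballAsym t y) ↔ (t : ℤ) + 1 ≤ Dasym x y := by
  rw [← not_iff_not, not_disjoint_ballAsym_iff, not_le, Int.lt_add_one_iff]

end AsymmetricCode

theorem asym_ball_disjoint_iff_dist_general (q n t : ℕ)
    (C : Set (Fin n → Fin q)) :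
    (∀ x ∈ C, ∀ y ∈ C, x ≠ y → Disjoint (ballAsym t x) (ballAsym t y)) ↔
    (∀ x ∈ C, ∀ y ∈ C, x ≠ y → (t : ℤ) + 1 ≤ Dasym x y) := by
  simp only [AsymmetricCode.disjoint_ballAsym_iff]

/-- A code `C ⊆ {0,…,q-1}ⁿ` corrects `t` asymmetric errors (its asymmetric-error balls
are pairwise disjoint) if and only if `Δ(x,y) ≥ t+1` for all distinct `x, y ∈ C`. -/
theorem asym_ball_disjoint_iff_dist (q n t : ℕ) (hq : 2 ≤ q) (hn : 1 ≤ n)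
    (C : Set (Fin n → Fin q)) :
    (∀ x ∈ C, ∀ y ∈ C, x ≠ y → Disjoint (ballAsym t x) (ballAsym t y)) ↔
    (∀ x ∈ C, ∀ y ∈ C, x ≠ y → (t : ℤ) + 1 ≤ Dasym x y) :=
  asym_ball_disjoint_iff_dist_general q n t C
end

section
/- Let c, c' ∈ {0,1,2}^m be ternary words and let u ∈ 𝔖^m(c), v ∈ 𝔖^m(c') be binary words of length 2m in their images. Then the Hamming distance satisfies d_H(u,v) ≥ d_H(c,c'). In particular, if d_H(c,c') ≥ 3 then d_H(u,v) ≥ 3. -/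
/-- The map `𝔖̃` on a binary pair: `00 ↦ 0`, `11 ↦ 0`, `01 ↦ 1`, `10 ↦ 2`. -/
def Stilde2 (p : Fin 2 × Fin 2) : Fin 3 :=
  if p.1 = p.2 then 0 else if p.1 = 0 then 1 else 2

/-- `𝔖` sends a ternary symbol `t` to the set of binary pairs mapping to it under `𝔖̃`:
`0 ↦ {00, 11}`, `1 ↦ {01}`, `2 ↦ {10}`. -/
def Sset (t : Fin 3) : Set (Fin 2 × Fin 2) := {p | Stilde2 p = t}

/-- Membership `u ∈ 𝔖^m(c)`: the binary word `u` of length `2m` has, for each `j < m`,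
its `j`-th pair of bits in `𝔖(c_j)`. -/
def Smem {m : ℕ} (c : Fin m → Fin 3) (u : Fin (2 * m) → Fin 2) : Prop :=
  ∀ j : Fin m,
    (u ⟨2 * (j : ℕ), by have := j.isLt; omega⟩,
     u ⟨2 * (j : ℕ) + 1, by have := j.isLt; omega⟩) ∈ Sset (c j)

/-! Reading `u ∈ 𝔖^m(c)` blockwise, `c` is `𝔖̃` applied to the word of bit pairs of `u`.
Applying a function symbol by symbol cannot increase Hamming distance, and two words of bit
pairs differ in at most as many pairs as they differ in bits. -/

def pairs {α : Type*} {m : ℕ} (x : Fin (2 * m) → α) (j : Fin m) : α × α :=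
  (x ⟨2 * j, by omega⟩, x ⟨2 * j + 1, by omega⟩)

theorem hammingDist_pairs_le {α : Type*} [DecidableEq α] {m : ℕ} (x y : Fin (2 * m) → α) :
    hammingDist (pairs x) (pairs y) ≤ hammingDist x y := by
  -- each differing pair is sent to a differing position inside it
  let pos (j : Fin m) : Fin (2 * m) :=
    if x ⟨2 * j, by omega⟩ ≠ y ⟨2 * j, by omega⟩ then ⟨2 * j, by omega⟩ else ⟨2 * j + 1, by omega⟩
  have pos_div_two (j : Fin m) : (pos j : ℕ) / 2 = j := by
    simp only [pos]; split <;> dsimp only <;> omega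
  refine Finset.card_le_card_of_injOn pos (fun j hj => ?_) (fun j₁ _ j₂ _ h => ?_)
  · simp only [Finset.coe_filter, Finset.mem_univ, true_and, pairs,
      ne_eq, Prod.ext_iff, not_and_or] at hj ⊢
    simp only [pos]
    split_ifs with h
    · exact h
    · exact hj.resolve_left h
  · exact Fin.ext (by rw [← pos_div_two j₁, ← pos_div_two j₂, h])

theorem Smem.eq_comp_pairs {m : ℕ} {c : Fin m → Fin 3} {u : Fin (2 * m) → Fin 2}
    (hu : Smem c u) : c = fun j => Stilde2 (pairs u j) :=
  funext fun j => (hu j).symm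

/-- For ternary words `c, c'` and binary words `u ∈ 𝔖^m(c)`, `v ∈ 𝔖^m(c')`, the Hamming
distance satisfies `d_H(u,v) ≥ d_H(c,c')`; in particular `d_H(c,c') ≥ 3 → d_H(u,v) ≥ 3`. -/
theorem hammingDist_image_ge (m : ℕ) (c c' : Fin m → Fin 3)
    (u v : Fin (2 * m) → Fin 2) (hu : Smem c u) (hv : Smem c' v) :
    hammingDist c c' ≤ hammingDist u v ∧
    (3 ≤ hammingDist c c' → 3 ≤ hammingDist u v) := by
  have key : hammingDist c c' ≤ hammingDist u v := by
    rw [hu.eq_comp_pairs, hv.eq_comp_pairs]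
    exact (hammingDist_comp_le_hammingDist fun _ => Stilde2).trans (hammingDist_pairs_le u v)
  exact ⟨key, fun h => h.trans key⟩
end

section
/- Let n be even and g ∈ ℤ/(n+1)ℤ. Then the Varshamov–Tenengol'ts code V_g is closed under the following operation for every i ∈ {1,…,n/2}: if v ∈ V_g has v_i = v_{n+1−i} (both 0 or both 1), then the word v' obtained from v by complementing both coordinates i and n+1−i (and leaving all other coordinates unchanged) is also in V_g. Consequently, under the pairing of coordinate i with coordinate n+1−i, V_g is a ternary code, i.e., 𝔖^{n/2}(𝔖̃^{n/2}(V_g)) = V_g. -/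
/-- The Varshamov–Tenengol'ts code `V_g = {x ∈ {0,1}ⁿ : Σᵢ i·xᵢ ≡ g (mod n+1)}`
(coordinates indexed `1,…,n`, here `i : Fin n` stands for coordinate `i+1`). -/
def VT (n : ℕ) (g : ZMod (n + 1)) : Set (Fin n → Fin 2) :=
  {x | ∑ i : Fin n, ((((i : ℕ) + 1 : ℕ) : ZMod (n + 1)) * ((x i : ℕ) : ZMod (n + 1))) = g}

/-!
Coordinates `i` and `n+1-i` carry VT weights summing to `n+1 ≡ 0`, so a change of `v` whose
difference `x - v` takes equal values on each pair leaves the VT syndrome unchanged; for even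
`n` the pairing has no fixed point and the syndrome change cancels pair by pair. Two binary pairs
with the same `𝔖̃`-image are either equal or both constant, so their differences are equal.
Complementing a constant pair keeps its `𝔖̃`-image `0`, so closure under that operation is a
special case of the inclusion `𝔖(𝔖̃(V_g)) ⊆ V_g`.
-/

namespace Fin

theorem rev_ne_self_of_even {n : ℕ} (hn : Even n) (i : Fin n) : i.rev ≠ i := by
  obtain ⟨k, rfl⟩ := hn
  intro h
  have := congrArg Fin.val h
  rw [Fin.val_rev] at this
  omega

theorem sum_eq_zero_of_add_rev_eq_zero {M : Type*} [AddCommMonoid M] {n : ℕ} (hn : Even n)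
    {f : Fin n → M} (hf : ∀ i, f i + f i.rev = 0) : ∑ i, f i = 0 :=
  Finset.sum_ninvolution Fin.rev hf (fun i _ => rev_ne_self_of_even hn i)
    (fun _ => Finset.mem_univ _) rev_rev

end Fin

theorem vtWeight_add_vtWeight_rev {n : ℕ} (i : Fin n) :
    (((i : ℕ) + 1 : ℕ) : ZMod (n + 1)) + (((i.rev : ℕ) + 1 : ℕ) : ZMod (n + 1)) = 0 := by
  rw [← Nat.cast_add, Fin.val_rev, ← ZMod.natCast_self]
  congr 1
  omega

theorem mem_VT_of_sub_rev_eq {n : ℕ} (hn : Even n) {g : ZMod (n + 1)} {x v : Fin n → Fin 2}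
    (hv : v ∈ VT n g)
    (hd : ∀ i, ((x i : ℕ) : ZMod (n + 1)) - (v i : ℕ) =
      ((x i.rev : ℕ) : ZMod (n + 1)) - (v i.rev : ℕ)) :
    x ∈ VT n g := by
  have hcancel : ∑ i : Fin n, (((i : ℕ) + 1 : ℕ) : ZMod (n + 1)) *
      (((x i : ℕ) : ZMod (n + 1)) - (v i : ℕ)) = 0 :=
    Fin.sum_eq_zero_of_add_rev_eq_zero hn fun i => by
      rw [← hd i, ← add_mul, vtWeight_add_vtWeight_rev, zero_mul]
  simp only [mul_sub, Finset.sum_sub_distrib, sub_eq_zero] at hcancel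
  exact hcancel.trans hv

theorem Stilde2_eq_iff {a b c d : Fin 2} :
    Stilde2 (a, b) = Stilde2 (c, d) ↔ (a = c ∧ b = d) ∨ (a = b ∧ c = d) := by
  revert a b c d
  decide

theorem natCast_sub_eq_of_Stilde2_eq {R : Type*} [AddGroupWithOne R]
    {a b c d : Fin 2} (h : Stilde2 (a, b) = Stilde2 (c, d)) :
    ((a : ℕ) : R) - (c : ℕ) = ((b : ℕ) : R) - (d : ℕ) := by
  rcases Stilde2_eq_iff.mp h with ⟨rfl, rfl⟩ | ⟨rfl, rfl⟩
  · rw [sub_self, sub_self]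
  · rfl

theorem mem_VT_of_Stilde2_eq {n : ℕ} (hn : Even n) {g : ZMod (n + 1)} {x v : Fin n → Fin 2}
    (hv : v ∈ VT n g) (hx : ∀ i, Stilde2 (x i, x i.rev) = Stilde2 (v i, v i.rev)) :
    x ∈ VT n g :=
  mem_VT_of_sub_rev_eq hn hv fun i => natCast_sub_eq_of_Stilde2_eq (hx i)

def complementPair {n : ℕ} (v : Fin n → Fin 2) (i : Fin n) : Fin n → Fin 2 :=
  fun k => if k = i ∨ k = i.rev then 1 - v k else v k

theorem Stilde2_complementPair {n : ℕ} {v : Fin n → Fin 2} {i : Fin n} (hvi : v i = v i.rev)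
    (j : Fin n) :
    Stilde2 (complementPair v i j, complementPair v i j.rev) = Stilde2 (v j, v j.rev) := by
  have hrev : j.rev = i ∨ j.rev = i.rev ↔ j = i ∨ j = i.rev := by
    rw [Fin.rev_eq_iff, Fin.rev_inj, or_comm]
  by_cases hj : j = i ∨ j = i.rev
  · have hvj : v j = v j.rev := by
      rcases hj with rfl | rfl
      · exact hvi
      · rw [Fin.rev_rev, hvi]
    simp only [complementPair, hj, hrev.mpr hj, if_true, hvj, Stilde2]
  · simp only [complementPair, hj, mt hrev.mp hj, if_false]

theorem VT_even_is_ternary_general (n : ℕ) (hn : Even n) (g : ZMod (n + 1)) :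
    (∀ v ∈ VT n g, ∀ i : Fin n, (i : ℕ) < n / 2 → v i = v (Fin.rev i) →
      (fun j => if j = i ∨ j = Fin.rev i then 1 - v j else v j) ∈ VT n g) ∧
    {x : Fin n → Fin 2 | ∃ v ∈ VT n g, ∀ i : Fin n,
        Stilde2 (x i, x (Fin.rev i)) = Stilde2 (v i, v (Fin.rev i))} = VT n g := by
  refine ⟨fun v hv i _ hvi => mem_VT_of_Stilde2_eq hn hv (Stilde2_complementPair hvi), ?_⟩
  ext x
  exact ⟨fun ⟨v, hv, hx⟩ => mem_VT_of_Stilde2_eq hn hv hx, fun hx => ⟨x, hx, fun _ => rfl⟩⟩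

/-- For `n` even, the VT code `V_g` is closed under complementing a pair of coordinates
`i` and `n+1-i` (0-based: `i` and `Fin.rev i`) whose entries are equal; consequently,
under this pairing `V_g` is ternary: `𝔖^{n/2}(𝔖̃^{n/2}(V_g)) = V_g`, i.e. the set of all
binary words having the same pairwise `𝔖̃`-image as some codeword is exactly `V_g`. -/
theorem VT_even_is_ternary (n : ℕ) (hn : Even n) (hpos : 1 ≤ n) (g : ZMod (n + 1)) :
    (∀ v ∈ VT n g, ∀ i : Fin n, (i : ℕ) < n / 2 → v i = v (Fin.rev i) →
      (fun j => if j = i ∨ j = Fin.rev i then 1 - v j else v j) ∈ VT n g) ∧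
    {x : Fin n → Fin 2 | ∃ v ∈ VT n g, ∀ i : Fin n,
        Stilde2 (x i, x (Fin.rev i)) = Stilde2 (v i, v (Fin.rev i))} = VT n g :=
  VT_even_is_ternary_general n hn g
end

section
/- Let G be a finite abelian group of odd order n+1 (so n is even) with non-identity elements g_1,…,g_n, and let g ∈ G. Then the Constantin–Rao code C_g is closed under the following operation: if x ∈ C_g and i ≠ j are indices with g_j = −g_i (such j exists and is unique, and j ≠ i since no non-identity element of a group of odd order is its own inverse) and x_i = x_j (both 0 or both 1), then the word x' obtained from x by complementing both coordinates i and j is also in C_g. Consequently, under the pairing of each coordinate h with the coordinate of its inverse −h, C_g is a ternary code, i.e., 𝔖^{n/2}(𝔖̃^{n/2}(C_g)) = C_g. -/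
/-- The Constantin–Rao code `C_g = {x ∈ {0,1}ⁿ : Σᵢ xᵢ·gᵢ = g}`, where `e : Fin n → G`
enumerates the non-identity elements of the abelian group `G`. -/
def CR {n : ℕ} {G : Type} [AddCommGroup G] (e : Fin n → G) (g : G) :
    Set (Fin n → Fin 2) :=
  {x | ∑ i : Fin n, (x i : ℕ) • e i = g}

/-!
Complementing two equal coordinates `i`, `j` with `g_j = -g_i` changes the syndrome
`Σ xₗ gₗ` by `±(g_i + g_j) = 0`. For the ternary property, two words with the same image
under `𝔖̃` have integer difference `d` constant on each pair `{h, -h}`, so the difference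
`S = Σ dₕ h` of their syndromes satisfies `S = -S`; since `|G|` is odd, `S = 0`.
-/

open Finset

section AntipodalSums

variable {ι G : Type*} [AddCommGroup G] {e : ι → G}

lemma sum_pair_nsmul_eq_zero [DecidableEq ι] {i j : ι} (hij : i ≠ j) (hej : e j = -e i)
    {a : ι → ℕ} (ha : a i = a j) : ∑ l ∈ {i, j}, a l • e l = 0 := by
  rw [sum_pair hij, hej, ← ha, smul_neg, add_neg_cancel]

lemma sum_nsmul_eq_of_eqOn_compl_pair [Fintype ι] [DecidableEq ι] {i j : ι} (hij : i ≠ j)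
    (hej : e j = -e i) {a b : ι → ℕ} (ha : a i = a j) (hb : b i = b j)
    (hab : ∀ l ∉ ({i, j} : Finset ι), a l = b l) :
    ∑ l, a l • e l = ∑ l, b l • e l := by
  rw [← sum_add_sum_compl {i, j}, ← sum_add_sum_compl {i, j} (fun l => b l • e l),
    sum_pair_nsmul_eq_zero hij hej ha, sum_pair_nsmul_eq_zero hij hej hb]
  exact congrArg _ (sum_congr rfl fun l hl => by rw [hab l (mem_compl.mp hl)])

lemma sum_zsmul_eq_neg_self [Fintype ι] {π : ι → ι} (hπ : Function.Involutive π)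
    (he : ∀ i, e (π i) = -e i) {d : ι → ℤ} (hd : ∀ i, d (π i) = d i) :
    ∑ i, d i • e i = -∑ i, d i • e i := by
  calc ∑ i, d i • e i = ∑ i, d (π i) • e (π i) := (Equiv.sum_comp hπ.toPerm _).symm
    _ = -∑ i, d i • e i := by simp only [hd, he, smul_neg, sum_neg_distrib]

end AntipodalSums

lemma eq_zero_of_eq_neg_of_odd_card {G : Type*} [AddCommGroup G]
    (hG : Odd (Nat.card G)) {S : G} (hS : S = -S) : S = 0 := by
  have h2 : 2 • S = 2 • (0 : G) := by
    rw [two_nsmul, smul_zero]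
    nth_rewrite 1 [hS]
    exact neg_add_cancel S
  exact (Nat.coprime_two_right.mpr hG).nsmul_right_bijective.injective h2

lemma Stilde2_eq_iff_sub_eq (a b c d : Fin 2) :
    Stilde2 (a, b) = Stilde2 (c, d) ↔ (a : ℤ) - b = c - d := by
  revert a b c d
  decide

lemma mem_CR_iff_sum_zsmul {n : ℕ} {G : Type} [AddCommGroup G] {e : Fin n → G} {g : G}
    {x : Fin n → Fin 2} : x ∈ CR e g ↔ ∑ i, ((x i : ℕ) : ℤ) • e i = g := by
  simp only [CR, Set.mem_ofPred_eq, natCast_zsmul]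

lemma mem_CR_of_Stilde2_eq {n : ℕ} {G : Type} [AddCommGroup G] (hG : Odd (Nat.card G))
    {e : Fin n → G} {g : G} {π : Fin n → Fin n} (hπ : Function.Involutive π)
    (he : ∀ i, e (π i) = -e i) {v x : Fin n → Fin 2} (hv : v ∈ CR e g)
    (hxv : ∀ i, Stilde2 (x i, x (π i)) = Stilde2 (v i, v (π i))) : x ∈ CR e g := by
  rw [mem_CR_iff_sum_zsmul] at hv ⊢
  set d : Fin n → ℤ := fun i => ((x i : ℕ) : ℤ) - ((v i : ℕ) : ℤ)
  have hd : ∀ i, d (π i) = d i := fun i => by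
    simp only [d]
    linarith [(Stilde2_eq_iff_sub_eq _ _ _ _).mp (hxv i)]
  have hS : ∑ i, d i • e i = 0 :=
    eq_zero_of_eq_neg_of_odd_card hG (sum_zsmul_eq_neg_self hπ he hd)
  calc ∑ i, ((x i : ℕ) : ℤ) • e i = ∑ i, ((v i : ℕ) : ℤ) • e i + ∑ i, d i • e i := by
        rw [← sum_add_distrib]
        exact sum_congr rfl fun i _ => by simp only [d, sub_smul, add_sub_cancel]
    _ = g := by rw [hS, add_zero, hv]

theorem CR_is_ternary_general (n : ℕ) (G : Type) [AddCommGroup G] [Fintype G]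
    (hcard : Fintype.card G = n + 1) (hodd : Odd (n + 1))
    (e : Fin n → G) (hinj : Function.Injective e)
    (g : G) (π : Fin n → Fin n) (hπ : ∀ i, e (π i) = -e i) :
    (∀ x ∈ CR e g, ∀ i j : Fin n, i ≠ j → e j = -e i → x i = x j →
      (fun l => if l = i ∨ l = j then 1 - x l else x l) ∈ CR e g) ∧
    {x : Fin n → Fin 2 | ∃ v ∈ CR e g, ∀ i : Fin n,
        Stilde2 (x i, x (π i)) = Stilde2 (v i, v (π i))} = CR e g := by
  refine ⟨fun x hx i j hij hej hxij => ?_, ?_⟩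
  · refine (sum_nsmul_eq_of_eqOn_compl_pair hij hej (by simp [hxij]) (by rw [hxij])
      fun l hl => ?_).trans hx
    simp only [mem_insert, mem_singleton, not_or] at hl
    simp [hl.1, hl.2]
  · have hG : Odd (Nat.card G) := by rwa [Nat.card_eq_fintype_card, hcard]
    have hπinv : Function.Involutive π := fun i => hinj (by rw [hπ, hπ, neg_neg])
    ext x
    exact ⟨fun ⟨v, hv, hxv⟩ => mem_CR_of_Stilde2_eq hG hπinv hπ hv hxv,
      fun hx => ⟨x, hx, fun _ => rfl⟩⟩

/-- Let `G` be a finite abelian group of odd order `n+1` with non-identity elements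
enumerated by `e : Fin n → G`. Then the Constantin–Rao code `C_g` is closed under
complementing two coordinates `i ≠ j` with `e j = -e i` whose entries are equal;
consequently, under the pairing `π` matching each coordinate with that of its inverse,
`C_g` is ternary: `𝔖^{n/2}(𝔖̃^{n/2}(C_g)) = C_g`. -/
theorem CR_is_ternary (n : ℕ) (G : Type) [AddCommGroup G] [Fintype G] [DecidableEq G]
    (hcard : Fintype.card G = n + 1) (hodd : Odd (n + 1))
    (e : Fin n → G) (hinj : Function.Injective e) (hne : ∀ i, e i ≠ 0)
    (g : G) (π : Fin n → Fin n) (hπ : ∀ i, e (π i) = -e i) :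
    (∀ x ∈ CR e g, ∀ i j : Fin n, i ≠ j → e j = -e i → x i = x j →
      (fun l => if l = i ∨ l = j then 1 - x l else x l) ∈ CR e g) ∧
    {x : Fin n → Fin 2 | ∃ v ∈ CR e g, ∀ i : Fin n,
        Stilde2 (x i, x (π i)) = Stilde2 (v i, v (π i))} = CR e g :=
  CR_is_ternary_general n G hcard hodd e hinj g π hπ
end

section
/- Let q ≥ 2, n ≥ 1, t̃ ≥ 1, ℓ ≥ 1, and let C ⊆ {0,1,…,q−1}^n be a t̃ℓ-code, i.e., Δ(x,y) ≥ t̃ℓ + 1 for all distinct x, y ∈ C. Then C corrects t̃ asymmetric ℓ-limited-magnitude errors (without wrap-around): for all distinct x, x̂ ∈ C there exist no vectors e, ê ∈ ℤ^n, each with at most t̃ nonzero coordinates and entries in {0,…,ℓ}, such that x − e = x̂ − ê with x − e ∈ {0,…,q−1}^n. -/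
/-
If `x - e = y - e'` with `e, e' ≥ 0`, then `yᵢ - xᵢ = e'ᵢ - eᵢ ≤ e'ᵢ`, so `N(x, y) ≤ Σ e'ᵢ ≤ t̃ℓ`,
and symmetrically `N(y, x) ≤ Σ eᵢ ≤ t̃ℓ`. Hence `Δ(x, y) ≤ t̃ℓ`, impossible for distinct codewords.
-/

theorem Finset.sum_le_card_filter_ne_zero_mul {ι R : Type*} [Fintype ι] [Semiring R] [DecidableEq R]
    [PartialOrder R] [IsOrderedAddMonoid R] (g : ι → R) (ℓ : R)
    (hg : ∀ i, g i ≤ ℓ) : ∑ i, g i ≤ (univ.filter fun i => g i ≠ 0).card * ℓ := by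
  rw [← Finset.sum_filter_ne_zero, ← nsmul_eq_mul]
  exact Finset.sum_le_card_nsmul _ _ _ fun i _ => hg i

theorem Nasym_le_sum_of_sub_eq_sub {n q : ℕ} {x y : Fin n → Fin q} {e e' : Fin n → ℤ}
    (he : ∀ i, 0 ≤ e i) (he' : ∀ i, 0 ≤ e' i)
    (h : ∀ i, ((x i : ℕ) : ℤ) - e i = ((y i : ℕ) : ℤ) - e' i) :
    Nasym x y ≤ ∑ i, e' i :=
  Finset.sum_le_sum fun i _ => max_le (by linarith [h i, he i]) (he' i)

theorem Nasym_le_mul_of_sub_eq_sub {n q : ℕ} {x y : Fin n → Fin q} {e e' : Fin n → ℤ}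
    {t ℓ : ℕ} (he : ∀ i, 0 ≤ e i) (he' : ∀ i, 0 ≤ e' i ∧ e' i ≤ ℓ)
    (hcard : (Finset.univ.filter fun i => e' i ≠ 0).card ≤ t)
    (h : ∀ i, ((x i : ℕ) : ℤ) - e i = ((y i : ℕ) : ℤ) - e' i) :
    Nasym x y ≤ (t * ℓ : ℤ) :=
  calc Nasym x y ≤ ∑ i, e' i := Nasym_le_sum_of_sub_eq_sub he (fun i => (he' i).1) h
    _ ≤ (Finset.univ.filter fun i => e' i ≠ 0).card * ℓ :=
      Finset.sum_le_card_filter_ne_zero_mul e' (ℓ : ℤ) fun i => (he' i).2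
    _ ≤ t * ℓ := by gcongr

theorem t_code_corrects_limited_magnitude_general (q n tt ℓ : ℕ) (C : Set (Fin n → Fin q))
    (hC : ∀ x ∈ C, ∀ y ∈ C, x ≠ y → (tt * ℓ : ℤ) + 1 ≤ Dasym x y) :
    ∀ x ∈ C, ∀ x' ∈ C, x ≠ x' →
      ¬∃ e e' : Fin n → ℤ,
        (Finset.univ.filter fun i => e i ≠ 0).card ≤ tt ∧ (∀ i, 0 ≤ e i ∧ e i ≤ ℓ) ∧
        (Finset.univ.filter fun i => e' i ≠ 0).card ≤ tt ∧ (∀ i, 0 ≤ e' i ∧ e' i ≤ ℓ) ∧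
        (∀ i, ((x i : ℕ) : ℤ) - e i = ((x' i : ℕ) : ℤ) - e' i) ∧
        (∀ i, 0 ≤ ((x i : ℕ) : ℤ) - e i ∧ ((x i : ℕ) : ℤ) - e i ≤ (q : ℤ) - 1) := by
  rintro x hx x' hx' hne ⟨e, e', hcard, he, hcard', he', heq, -⟩
  have hxx' : Nasym x x' ≤ (tt * ℓ : ℤ) :=
    Nasym_le_mul_of_sub_eq_sub (fun i => (he i).1) he' hcard' heq
  have hx'x : Nasym x' x ≤ (tt * ℓ : ℤ) :=
    Nasym_le_mul_of_sub_eq_sub (fun i => (he' i).1) he hcard fun i => (heq i).symm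
  have hΔ : Dasym x x' ≤ (tt * ℓ : ℤ) := max_le hxx' hx'x
  linarith [hC x hx x' hx' hne]

/-- If `C ⊆ {0,…,q-1}ⁿ` is a `t̃ℓ`-code (i.e. `Δ(x,y) ≥ t̃ℓ + 1` for distinct codewords),
then `C` corrects `t̃` asymmetric `ℓ`-limited-magnitude errors (without wrap-around). -/
theorem t_code_corrects_limited_magnitude (q n tt ℓ : ℕ) (hq : 2 ≤ q) (hn : 1 ≤ n)
    (ht : 1 ≤ tt) (hl : 1 ≤ ℓ) (C : Set (Fin n → Fin q))
    (hC : ∀ x ∈ C, ∀ y ∈ C, x ≠ y → (tt * ℓ : ℤ) + 1 ≤ Dasym x y) :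
    ∀ x ∈ C, ∀ x' ∈ C, x ≠ x' →
      ¬∃ e e' : Fin n → ℤ,
        (Finset.univ.filter fun i => e i ≠ 0).card ≤ tt ∧ (∀ i, 0 ≤ e i ∧ e i ≤ ℓ) ∧
        (Finset.univ.filter fun i => e' i ≠ 0).card ≤ tt ∧ (∀ i, 0 ≤ e' i ∧ e' i ≤ ℓ) ∧
        (∀ i, ((x i : ℕ) : ℤ) - e i = ((x' i : ℕ) : ℤ) - e' i) ∧
        (∀ i, 0 ≤ ((x i : ℕ) : ℤ) - e i ∧ ((x i : ℕ) : ℤ) - e i ≤ (q : ℤ) - 1) :=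
  t_code_corrects_limited_magnitude_general q n tt ℓ C hC
end
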